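/- Let θ ∈ (0,π) and let ψ be defined on {z ∈ ℂⁿ : Re z_j ≤ 0 for all j} by ψ(z) = c₀ + c₁·z + ∫_{ℝ₊ⁿ∖{0}} (e^{z·u} − 1) dμ(u), where c₀ ≤ 0, c₁ ∈ ℝ₊ⁿ, and μ is a positive measure on ℝ₊ⁿ∖{0} such that for sufficiently small δ > 0 the functions u ↦ u_j are μ-integrable on [0,δ)ⁿ∖{0} and μ(ℝ₊ⁿ∖[0,δ)ⁿ) < ∞. Then ψ maps the cone S_θⁿ into the sector S_θ; that is, if z = s + iy with s_j < 0 and |y_j| ≤ cot(θ/2)·(−s_j) for all j, then Re ψ(z) ≤ 0 and |Im ψ(z)| ≤ cot(θ/2)·(−Re ψ(z)). -/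
import Mathlib


open MeasureTheory Filter Set

noncomputable section

/-- The open negative orthant `(-∞,0)^n`. -/
def negOrthant (n : ℕ) : Set (Fin n → ℝ) := {s | ∀ i, s i < 0}

/-- `f` is absolutely monotone on `(-∞,0)^n`: it is `C^∞` there and all its
iterated partial derivatives (of all orders, including order `0`) are nonnegative. -/
def AbsMono (n : ℕ) (f : (Fin n → ℝ) → ℝ) : Prop :=
  ContDiffOn ℝ (⊤ : ℕ∞) f (negOrthant n) ∧
  ∀ (k : ℕ) (m : Fin k → Fin n), ∀ x ∈ negOrthant n,
    0 ≤ iteratedFDerivWithin ℝ k f (negOrthant n) x (fun i => Pi.single (m i) 1)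

/-- `ψ` belongs to the class `T_n`: it is a nonpositive `C^∞` function on `(-∞,0)^n`
all of whose partial derivatives of every order `≥ 1` are nonnegative. -/
def MemT (n : ℕ) (ψ : (Fin n → ℝ) → ℝ) : Prop :=
  ContDiffOn ℝ (⊤ : ℕ∞) ψ (negOrthant n) ∧
  (∀ x ∈ negOrthant n, ψ x ≤ 0) ∧
  ∀ (k : ℕ) (m : Fin (k + 1) → Fin n), ∀ x ∈ negOrthant n,
    0 ≤ iteratedFDerivWithin ℝ (k + 1) ψ (negOrthant n) x (fun i => Pi.single (m i) 1)

/-- `ℝ₊ⁿ ∖ {0}`. -/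
def posPart (n : ℕ) : Set (Fin n → ℝ) := {u | (∀ i, 0 ≤ u i) ∧ u ≠ 0}

/-- `[0,δ)ⁿ ∖ {0}`. -/
def smallBox (n : ℕ) (δ : ℝ) : Set (Fin n → ℝ) := {u | (∀ i, 0 ≤ u i ∧ u i < δ) ∧ u ≠ 0}

/-- `ℝ₊ⁿ ∖ [0,δ)ⁿ`. -/
def farPart (n : ℕ) (δ : ℝ) : Set (Fin n → ℝ) := {u | (∀ i, 0 ≤ u i) ∧ ¬ ∀ i, u i < δ}

/-- The conditions on the representing measure: for sufficiently small `δ > 0`,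
the coordinate functions are integrable on `[0,δ)ⁿ ∖ {0}` and
`μ(ℝ₊ⁿ ∖ [0,δ)ⁿ) < ∞`. -/
def GoodMeasure (n : ℕ) (μ : Measure (Fin n → ℝ)) : Prop :=
  ∃ δ > (0:ℝ), (∀ j, IntegrableOn (fun u => u j) (smallBox n δ) μ) ∧ μ (farPart n δ) < ⊤


/-- membership in the closed sector. -/
def inSector (c : ℝ) (w : ℂ) : Prop := w.re ≤ 0 ∧ |w.im| ≤ c * (-w.re)

lemma inSector_zero (c : ℝ) : inSector c 0 := by
  constructor <;> simp

lemma inSector_add {c : ℝ} {w₁ w₂ : ℂ} (h₁ : inSector c w₁) (h₂ : inSector c w₂) :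
    inSector c (w₁ + w₂) := by
  obtain ⟨h1r, h1i⟩ := h₁
  obtain ⟨h2r, h2i⟩ := h₂
  refine ⟨by simp only [Complex.add_re]; linarith, ?_⟩
  simp only [Complex.add_im, Complex.add_re]
  calc |w₁.im + w₂.im| ≤ |w₁.im| + |w₂.im| := abs_add_le _ _
    _ ≤ c * (-(w₁.re + w₂.re)) := by linarith

lemma inSector_exp_sub_one {c : ℝ} (hc : 0 ≤ c) {ζ : ℂ} (hζ : inSector c ζ) :
    inSector c (Complex.exp ζ - 1) := by
  obtain ⟨hre, him⟩ := hζ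
  set x := ζ.re
  set y := ζ.im
  have hE : (0:ℝ) < Real.exp x := Real.exp_pos x
  have hE1 : Real.exp x * (1 - x) ≤ 1 := by
    have h2 : Real.exp x * (-x + 1) ≤ Real.exp x * Real.exp (-x) :=
      mul_le_mul_of_nonneg_left (Real.add_one_le_exp (-x)) hE.le
    rw [← Real.exp_add, add_neg_cancel, Real.exp_zero] at h2
    nlinarith
  have hcos : Real.cos y ≤ 1 := Real.cos_le_one y
  have hcos' : -1 ≤ Real.cos y := Real.neg_one_le_cos y
  have hsin : |Real.sin y| ≤ |y| := Real.abs_sin_le_abs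
  have hyabs : (0:ℝ) ≤ |y| := abs_nonneg y
  constructor
  · simp only [Complex.sub_re, Complex.exp_re, Complex.one_re]
    nlinarith
  · simp only [Complex.sub_im, Complex.exp_im, Complex.sub_re, Complex.exp_re,
      Complex.one_im, Complex.one_re, sub_zero]
    rw [abs_mul, abs_of_pos hE]
    nlinarith [mul_le_mul_of_nonneg_left hsin hE.le, mul_le_mul_of_nonneg_left him hE.le,
      mul_le_mul_of_nonneg_left hE1 hc, mul_le_mul_of_nonneg_left hcos (mul_nonneg hc hE.le)]

lemma inSector_sum {c : ℝ} {ι : Type*} (s : Finset ι) (f : ι → ℂ)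
    (h : ∀ i ∈ s, inSector c (f i)) : inSector c (∑ i ∈ s, f i) :=
  Finset.sum_induction f (inSector c) (fun _ _ => inSector_add) (inSector_zero c) h

lemma posPart_measurableSet (n : ℕ) : MeasurableSet (posPart n) := by
  have h : _root_.posPart n = (⋂ i, {u : Fin n → ℝ | 0 ≤ u i}) ∩ {(0 : Fin n → ℝ)}ᶜ := by
    ext u
    simp only [_root_.posPart, Set.mem_setOf_eq, Set.mem_inter_iff, Set.mem_iInter,
      Set.mem_compl_iff, Set.mem_singleton_iff]
  rw [h]
  exact (MeasurableSet.iInter fun i =>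
    measurableSet_le measurable_const (measurable_pi_apply i)).inter
    (measurableSet_singleton 0).compl

/-- a function given on `{Re z ≤ 0} ⊆ ℂⁿ` by the integral
representation maps the cone `S_θⁿ` into the sector `S_θ`: if `z = s + iy`
with `s_j < 0` and `|y_j| ≤ cot(θ/2)·(−s_j)` for all `j`, then `Re ψ(z) ≤ 0`
and `|Im ψ(z)| ≤ cot(θ/2)·(−Re ψ(z))`. -/
theorem maps_cone_into_sector (n : ℕ) (θ : ℝ) (hθ : θ ∈ Set.Ioo 0 Real.pi)
    (c₀ : ℝ) (hc₀ : c₀ ≤ 0) (c₁ : Fin n → ℝ) (hc₁ : ∀ j, 0 ≤ c₁ j)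
    (μ : Measure (Fin n → ℝ)) (hμ : GoodMeasure n μ) (hsupp : μ (posPart n)ᶜ = 0)
    (ψ : (Fin n → ℂ) → ℂ)
    (hrep : ∀ z : Fin n → ℂ, (∀ j, (z j).re ≤ 0) →
      ψ z = (c₀ : ℂ) + ∑ j, (c₁ j : ℂ) * z j +
        ∫ u in posPart n, (Complex.exp (∑ i, z i * (u i : ℂ)) - 1) ∂μ) :
    ∀ z : Fin n → ℂ,
      (∀ j, (z j).re < 0 ∧ |(z j).im| ≤ Real.cot (θ / 2) * (-(z j).re)) →
      (ψ z).re ≤ 0 ∧ |(ψ z).im| ≤ Real.cot (θ / 2) * (-(ψ z).re) := by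
  intro z hz
  set c := Real.cot (θ / 2) with hcdef
  have hc : 0 ≤ c := by
    rw [hcdef, Real.cot_eq_cos_div_sin]
    have h1 : 0 < Real.sin (θ / 2) :=
      Real.sin_pos_of_pos_of_lt_pi (by linarith [hθ.1]) (by linarith [hθ.2, Real.pi_pos])
    have h2 : 0 ≤ Real.cos (θ / 2) :=
      Real.cos_nonneg_of_mem_Icc ⟨by linarith [hθ.1, Real.pi_pos], by linarith [hθ.2]⟩
    positivity
  -- membership for each piece
  have h0 : inSector c (c₀ : ℂ) := by
    refine ⟨by simpa using hc₀, ?_⟩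
    simp only [Complex.ofReal_im, Complex.ofReal_re, abs_zero]
    have : 0 ≤ -c₀ := by linarith
    positivity
  have hL : inSector c (∑ j, (c₁ j : ℂ) * z j) := by
    refine inSector_sum _ _ fun j _ => ?_
    refine ⟨?_, ?_⟩
    · rw [Complex.re_ofReal_mul]
      exact mul_nonpos_of_nonneg_of_nonpos (hc₁ j) (hz j).1.le
    · rw [Complex.im_ofReal_mul, Complex.re_ofReal_mul, abs_mul, abs_of_nonneg (hc₁ j)]
      nlinarith [mul_le_mul_of_nonneg_left (hz j).2 (hc₁ j)]
  set f : (Fin n → ℝ) → ℂ := fun u => Complex.exp (∑ i, z i * (u i : ℂ)) - 1 with hfdef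
  have hptwise : ∀ u ∈ posPart n, inSector c (f u) := by
    intro u hu
    apply inSector_exp_sub_one hc
    have hre : (∑ i, z i * (u i : ℂ)).re = ∑ i, (z i).re * u i := by
      rw [Complex.re_sum]
      exact Finset.sum_congr rfl fun i _ => by simp [Complex.mul_re]
    have him : (∑ i, z i * (u i : ℂ)).im = ∑ i, (z i).im * u i := by
      rw [Complex.im_sum]
      exact Finset.sum_congr rfl fun i _ => by simp [Complex.mul_im]
    constructor
    · rw [hre]
      exact Finset.sum_nonpos fun i _ =>
        mul_nonpos_of_nonpos_of_nonneg (hz i).1.le (hu.1 i)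
    · rw [him, hre]
      calc |∑ i, (z i).im * u i| ≤ ∑ i, |(z i).im * u i| := Finset.abs_sum_le_sum_abs _ _
        _ ≤ ∑ i, c * (-(z i).re * u i) := by
            refine Finset.sum_le_sum fun i _ => ?_
            rw [abs_mul, abs_of_nonneg (hu.1 i), ← mul_assoc]
            exact mul_le_mul_of_nonneg_right (hz i).2 (hu.1 i)
        _ = c * (-∑ i, (z i).re * u i) := by
            rw [← Finset.sum_neg_distrib, Finset.mul_sum]
            exact Finset.sum_congr rfl fun i _ => by ring
  have hI : inSector c (∫ u in posPart n, f u ∂μ) := by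
    by_cases hint : IntegrableOn f (posPart n) μ
    · have hae : ∀ᵐ u ∂(μ.restrict (posPart n)), inSector c (f u) :=
        (ae_restrict_mem (posPart_measurableSet n)).mono hptwise
      have hRe : Integrable (fun u => (f u).re) (μ.restrict (posPart n)) := hint.re
      have hIm : Integrable (fun u => (f u).im) (μ.restrict (posPart n)) := hint.im
      have hre_eq : (∫ u in posPart n, f u ∂μ).re = ∫ u in posPart n, (f u).re ∂μ := by
        simpa using (_root_.integral_re hint).symm
      have him_eq : (∫ u in posPart n, f u ∂μ).im = ∫ u in posPart n, (f u).im ∂μ := by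
        simpa using (_root_.integral_im hint).symm
      constructor
      · rw [hre_eq]
        exact integral_nonpos_of_ae (hae.mono fun u hu => hu.1)
      · rw [him_eq, hre_eq]
        calc |∫ u in posPart n, (f u).im ∂μ| ≤ ∫ u in posPart n, |(f u).im| ∂μ := by
              simpa [Real.norm_eq_abs] using
                norm_integral_le_integral_norm (μ := μ.restrict (posPart n))
                  (fun u => (f u).im)
          _ ≤ ∫ u in posPart n, c * (-(f u).re) ∂μ := by
              refine integral_mono_ae hIm.abs ((hRe.neg).const_mul c)
                (hae.mono fun u hu => hu.2)
          _ = c * (-∫ u in posPart n, (f u).re ∂μ) := by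
              rw [MeasureTheory.integral_const_mul, integral_neg]
    · rw [MeasureTheory.integral_undef hint]
      exact inSector_zero c
  have hψ : ψ z = (c₀ : ℂ) + ∑ j, (c₁ j : ℂ) * z j + ∫ u in posPart n, f u ∂μ :=
    hrep z fun j => (hz j).1.le
  have : inSector c (ψ z) := by
    rw [hψ]
    exact inSector_add (inSector_add h0 hL) hI
  exact this
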